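/- Fix initial data i₀ ∈ (0,1), s₀ ∈ (0,1−i₀]. If a sequence of controls (u_n) converges weakly* to u in L^∞(0,∞) (i.e. ∫₀^∞ u_n·g dt → ∫₀^∞ u·g dt for every g ∈ L¹(0,∞)), then s^{u_n} → s^u and i^{u_n} → i^u uniformly on every bounded subinterval of (0,∞). -/

import Mathlib

open MeasureTheory Filter Set intervalIntegral
open scoped ENNReal

noncomputable section

/-- A control: a measurable (essentially bounded) function with values in `[0, umax]`. -/
def IsControl (umax : ℝ) (u : ℝ → ℝ) : Prop :=
  Measurable u ∧ ∀ t : ℝ, u t ∈ Set.Icc (0 : ℝ) umax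

/-- Solution of the controlled SIR system on `[0,∞)`, in integral (i.e. locally absolutely
continuous) form: `s' = -(β-u)·s·i`, `i' = (β-u)·s·i - γ·i` a.e., `s 0 = s₀`, `i 0 = i₀`. -/
def SIRSol (β γ : ℝ) (u s i : ℝ → ℝ) (s₀ i₀ : ℝ) : Prop :=
  Continuous s ∧ Continuous i ∧
  (∀ t : ℝ, 0 ≤ t → s t = s₀ + ∫ τ in (0:ℝ)..t, -((β - u τ) * s τ * i τ)) ∧
  (∀ t : ℝ, 0 ≤ t → i t = i₀ + ∫ τ in (0:ℝ)..t, ((β - u τ) * s τ * i τ - γ * i τ))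

/-- Solution of the controlled SIR system on `[0,T]`, in integral form. -/
def SIRSolOn (β γ T : ℝ) (u s i : ℝ → ℝ) (s₀ i₀ : ℝ) : Prop :=
  ContinuousOn s (Set.Icc 0 T) ∧ ContinuousOn i (Set.Icc 0 T) ∧
  (∀ t ∈ Set.Icc (0:ℝ) T, s t = s₀ + ∫ τ in (0:ℝ)..t, -((β - u τ) * s τ * i τ)) ∧
  (∀ t ∈ Set.Icc (0:ℝ) T, i t = i₀ + ∫ τ in (0:ℝ)..t, ((β - u τ) * s τ * i τ - γ * i τ))

/-- The triangle `T = {(s,i) ∈ (0,1]² : s + i ≤ 1}`. -/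
def Triangle : Set (ℝ × ℝ) :=
  {p | 0 < p.1 ∧ p.1 ≤ 1 ∧ 0 < p.2 ∧ p.2 ≤ 1 ∧ p.1 + p.2 ≤ 1}

/-- The curve `Φ_max`. -/
def PhiMax (β γ umax iM : ℝ) (x : ℝ) : ℝ :=
  if x < γ / (β - umax) then iM
  else γ / (β - umax) + iM - x + (γ / (β - umax)) * (Real.log x - Real.log (γ / (β - umax)))

/-- The curve `Φ₀`. -/
def Phi0 (β γ iM : ℝ) (x : ℝ) : ℝ :=
  if x < γ / β then iM
  else γ / β + iM - x + (γ / β) * (Real.log x - Real.log (γ / β))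

/-- The ICU (state) constraint `i(t) ≤ i_M` for all `t ≥ 0`. -/
def Admissible (iM : ℝ) (i : ℝ → ℝ) : Prop := ∀ t : ℝ, 0 ≤ t → i t ≤ iM

/-- Infinite-horizon cost `J^∞(u) = ∫₀^∞ (λ₁ u + λ₂ i) dt`, with values in `[0,∞]`. -/
def Cost (l1 l2 : ℝ) (u i : ℝ → ℝ) : ℝ≥0∞ :=
  ∫⁻ t in Set.Ioi (0:ℝ), ENNReal.ofReal (l1 * u t + l2 * i t)

/-- Finite-horizon cost `J^T(u) = ∫₀^T (λ₁ u + λ₂ i) dt`. -/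
def CostT (l1 l2 T : ℝ) (u i : ℝ → ℝ) : ℝ≥0∞ :=
  ∫⁻ t in Set.Ioc (0:ℝ) T, ENNReal.ofReal (l1 * u t + l2 * i t)

/-- The safe (no-effort) zone `A`. -/
def SafeZone (β γ iM : ℝ) : Set (ℝ × ℝ) :=
  {p | p ∈ Triangle ∧ ∃ s i : ℝ → ℝ,
    SIRSol β γ (fun _ => 0) s i p.1 p.2 ∧ Admissible iM i}

/-- The viable (feasible) set `B`. -/
def ViableSet (β γ umax iM : ℝ) : Set (ℝ × ℝ) :=
  {p | p ∈ Triangle ∧ ∃ u s i : ℝ → ℝ, IsControl umax u ∧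
    SIRSol β γ u s i p.1 p.2 ∧ Admissible iM i}

/-- Weak* convergence in `L^∞(0,∞)`: testing against every `L¹` function. -/
def WeakStarLim (un : ℕ → ℝ → ℝ) (u : ℝ → ℝ) : Prop :=
  ∀ g : ℝ → ℝ, MeasureTheory.IntegrableOn g (Set.Ioi 0) →
    Filter.Tendsto (fun n => ∫ t in Set.Ioi (0:ℝ), un n t * g t) Filter.atTop
      (nhds (∫ t in Set.Ioi (0:ℝ), u t * g t))

/-!
Along a control, the triangle is invariant: `s` and `i` solve linear equations `x' = c x` with
bounded `c`, hence stay positive (a backward Gronwall argument from a first zero), and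
`(s + i)' = -γ i ≤ 0`. On the triangle the vector field is Lipschitz, so subtracting the equations
for `uₙ` and `u` leaves Lipschitz terms plus the forcing `Eₙ(t) = ∫₀ᵗ (uₙ - u) s i`, and Gronwall
bounds `|sₙ - s| + |iₙ - i|` on `[0, T]` by `2 e^{KT} sup |Eₙ|`. Testing the weak* convergence
against `1_(0,t] · s i` gives `Eₙ(t) → 0` for each `t`; the `Eₙ` are equi-Lipschitz, so the
convergence is uniform on `[0, T]`.
-/

open scoped Topology

theorem le_mul_exp_of_le_integral {w : ℝ → ℝ} {K ε T : ℝ} (hK : 0 ≤ K) (hw : Continuous w)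
    (hle : ∀ t ∈ Icc 0 T, w t ≤ K * (∫ τ in (0:ℝ)..t, w τ) + ε) :
    ∀ t ∈ Icc 0 T, w t ≤ ε * Real.exp (K * t) := by
  have hderiv (t : ℝ) : HasDerivAt (fun t => ∫ τ in (0:ℝ)..t, w τ) (w t) t :=
    hw.integral_hasStrictDerivAt 0 t |>.hasDerivAt
  have hprim := le_gronwallBound_of_liminf_deriv_right_le (δ := 0)
    (fun t _ => (hderiv t).continuousAt.continuousWithinAt)
    (fun t _ _ hr => (hderiv t).hasDerivWithinAt.liminf_right_slope_le hr)
    (by simp) (fun t ht => hle t (Ico_subset_Icc_self ht))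
  intro t ht
  calc w t ≤ K * (∫ τ in (0:ℝ)..t, w τ) + ε := hle t ht
    _ ≤ K * gronwallBound 0 K ε (t - 0) + ε := by gcongr; exact hprim t ht
    _ = ε * Real.exp (K * t) := by
      rcases hK.eq_or_lt with rfl | hK
      · simp [gronwallBound_K0]
      · rw [gronwallBound_of_K_ne_0 hK.ne', sub_zero]; field_simp; ring

theorem tendstoUniformlyOn_of_lipschitzOnWith {ι X α : Type*} [PseudoMetricSpace X]
    [PseudoMetricSpace α] {p : Filter ι} {F : ι → X → α} {f : X → α} {s : Set X} {K : NNReal}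
    (hs : IsCompact s) (hF : ∀ n, LipschitzOnWith K (F n) s)
    (hlim : ∀ x ∈ s, Tendsto (fun n => F n x) p (𝓝 (f x))) :
    TendstoUniformlyOn F f p s := by
  have heq : EquicontinuousOn F s := by
    rw [← equicontinuous_restrict_iff]
    refine (Metric.uniformEquicontinuous_of_continuity_modulus (fun r => K * r) ?_ _
      fun x y n => ?_).equicontinuous
    · simpa using (tendsto_id (x := 𝓝 (0:ℝ))).const_mul (K:ℝ)
    · exact (hF n).dist_le_mul x x.2 y y.2
  have := (EquicontinuousOn.tendsto_uniformOnFun_iff_pi' (𝔖 := {s}) (by simpa using hs)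
    (by simpa using heq) p f).2 ?_
  · exact UniformOnFun.tendsto_iff_tendstoUniformlyOn.1 this s rfl
  · simpa [tendsto_pi_nhds] using fun x hx => hlim x hx

theorem pos_of_eq_add_integral_mul {c x : ℝ → ℝ} {M x₀ T : ℝ} (hx : Continuous x)
    (hc : ∀ t ∈ Icc 0 T, |c t| ≤ M)
    (hcx : IntervalIntegrable (fun t => c t * x t) volume 0 T)
    (heq : ∀ t ∈ Icc 0 T, x t = x₀ + ∫ τ in (0:ℝ)..t, c τ * x τ) (hx₀ : 0 < x₀) :
    ∀ t ∈ Icc 0 T, 0 < x t := by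
  by_contra! ⟨t₁, ht₁, hxt₁⟩
  have hM : 0 ≤ M := (abs_nonneg _).trans (hc t₁ ht₁)
  have hx0 : x 0 = x₀ := by simpa using heq 0 ⟨le_rfl, ht₁.1.trans ht₁.2⟩
  obtain ⟨t₀, ht₀, hxt₀⟩ : ∃ t₀ ∈ Icc 0 t₁, x t₀ = 0 :=
    intermediate_value_Icc' ht₁.1 hx.continuousOn ⟨hxt₁, by rw [hx0]; exact hx₀.le⟩
  have hsub : Icc 0 t₀ ⊆ Icc 0 T := Icc_subset_Icc le_rfl (ht₀.2.trans ht₁.2)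
  have hint {a b : ℝ} (ha : a ∈ Icc 0 t₀) (hb : b ∈ Icc 0 t₀) :
      IntervalIntegrable (fun t => c t * x t) volume a b :=
    hcx.mono_set ((uIcc_subset_Icc (hsub ha) (hsub hb)).trans Icc_subset_uIcc)
  -- Backward Gronwall for `|x|`, started at the zero `t₀`, forces `x 0 = 0`.
  have hback : ∀ r ∈ Icc 0 t₀, |x (t₀ - r)| ≤ M * (∫ σ in (0:ℝ)..r, |x (t₀ - σ)|) + 0 := by
    intro r hr
    have hr' : t₀ - r ∈ Icc 0 t₀ := ⟨by linarith [hr.2], by linarith [hr.1]⟩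
    have hdiff : x t₀ - x (t₀ - r) = ∫ τ in (t₀ - r)..t₀, c τ * x τ := by
      rw [heq t₀ (hsub ⟨ht₀.1, le_rfl⟩), heq (t₀ - r) (hsub hr'), add_sub_add_left_eq_sub,
        integral_interval_sub_left (hint ⟨le_rfl, ht₀.1⟩ ⟨ht₀.1, le_rfl⟩)
          (hint ⟨le_rfl, ht₀.1⟩ hr')]
    calc |x (t₀ - r)| = ‖∫ τ in (t₀ - r)..t₀, c τ * x τ‖ := by
          rw [← hdiff, hxt₀, zero_sub, Real.norm_eq_abs, abs_neg]
      _ ≤ ∫ τ in (t₀ - r)..t₀, M * |x τ| := by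
          refine norm_integral_le_of_norm_le (by linarith [hr.1]) (ae_of_all _ fun τ hτ => ?_)
            ((hx.abs.const_mul M).intervalIntegrable _ _)
          rw [Real.norm_eq_abs, abs_mul]
          exact mul_le_mul_of_nonneg_right (hc τ (hsub ⟨hr'.1.trans hτ.1.le, hτ.2⟩))
            (abs_nonneg _)
      _ = M * (∫ σ in (0:ℝ)..r, |x (t₀ - σ)|) + 0 := by
          rw [intervalIntegral.integral_const_mul,
            integral_comp_sub_left (fun τ => |x τ|), sub_zero, add_zero]
  have h0 := le_mul_exp_of_le_integral hM (hx.comp (continuous_sub_left t₀)).abs hback t₀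
    ⟨ht₀.1, le_rfl⟩
  simp only [Function.comp_apply, sub_self, hx0, zero_mul] at h0
  exact (abs_pos.2 hx₀.ne').not_ge h0

namespace IsControl

variable {umax : ℝ} {u : ℝ → ℝ}

theorem nonneg (hu : IsControl umax u) : 0 ≤ umax := (hu.2 0).1.trans (hu.2 0).2

theorem abs_le (hu : IsControl umax u) (t : ℝ) : |u t| ≤ umax := by
  rw [abs_of_nonneg (hu.2 t).1]; exact (hu.2 t).2

theorem abs_const_sub_le (hu : IsControl umax u) (c t : ℝ) : |c - u t| ≤ |c| + umax :=
  (abs_sub _ _).trans (add_le_add_right (hu.abs_le t) _)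

theorem abs_sub_le {v : ℝ → ℝ} (hu : IsControl umax u) (hv : IsControl umax v) (t : ℝ) :
    |u t - v t| ≤ umax :=
  abs_sub_le_iff.2 ⟨by linarith [(hu.2 t).2, (hv.2 t).1], by linarith [(hu.2 t).1, (hv.2 t).2]⟩

theorem intervalIntegrable (hu : IsControl umax u) (a b : ℝ) :
    IntervalIntegrable u volume a b :=
  (intervalIntegrable_const (c := umax)).mono_fun hu.1.aestronglyMeasurable
    (ae_of_all _ fun t => (hu.abs_le t).trans (le_abs_self umax))

theorem intervalIntegrable_const_sub_mul (hu : IsControl umax u) (c : ℝ) {g : ℝ → ℝ}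
    (hg : Continuous g) (a b : ℝ) :
    IntervalIntegrable (fun t => (c - u t) * g t) volume a b :=
  (intervalIntegrable_const.sub (hu.intervalIntegrable a b)).mul_continuousOn hg.continuousOn

end IsControl

namespace SIRSol

variable {β γ umax s₀ i₀ : ℝ} {u s i : ℝ → ℝ}

theorem intervalIntegrable_incidence (hu : IsControl umax u) (h : SIRSol β γ u s i s₀ i₀)
    (a b : ℝ) : IntervalIntegrable (fun t => (β - u t) * s t * i t) volume a b := by
  simpa only [mul_assoc, Pi.mul_apply] using
    hu.intervalIntegrable_const_sub_mul β (h.1.mul h.2.1) a b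

theorem i_pos (hu : IsControl umax u) (h : SIRSol β γ u s i s₀ i₀) (hi₀ : 0 < i₀) {t : ℝ}
    (ht : 0 ≤ t) : 0 < i t := by
  obtain ⟨M, hM⟩ := (isCompact_Icc (a := 0) (b := t)).exists_bound_of_continuousOn h.1.continuousOn
  refine pos_of_eq_add_integral_mul (c := fun τ => (β - u τ) * s τ - γ)
    (M := (|β| + umax) * M + |γ|) h.2.1 (fun τ hτ => ?_) ?_ (fun τ hτ => ?_) hi₀ t ⟨ht, le_rfl⟩
  · calc |(β - u τ) * s τ - γ| ≤ |β - u τ| * |s τ| + |γ| := by rw [← abs_mul]; exact abs_sub _ _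
      _ ≤ (|β| + umax) * M + |γ| := by
        gcongr
        · exact add_nonneg (abs_nonneg β) hu.nonneg
        · exact hu.abs_const_sub_le β τ
        · exact hM τ hτ
  · exact ((hu.intervalIntegrable_const_sub_mul β h.1 0 t).sub
      intervalIntegrable_const).mul_continuousOn h.2.1.continuousOn
  · rw [h.2.2.2 τ hτ.1]
    congr 2 with σ
    ring

theorem s_pos (hu : IsControl umax u) (h : SIRSol β γ u s i s₀ i₀) (hs₀ : 0 < s₀) {t : ℝ}
    (ht : 0 ≤ t) : 0 < s t := by
  obtain ⟨M, hM⟩ :=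
    (isCompact_Icc (a := 0) (b := t)).exists_bound_of_continuousOn h.2.1.continuousOn
  refine pos_of_eq_add_integral_mul (c := fun τ => -((β - u τ) * i τ))
    (M := (|β| + umax) * M) h.1 (fun τ hτ => ?_) ?_ (fun τ hτ => ?_) hs₀ t ⟨ht, le_rfl⟩
  · rw [abs_neg, abs_mul]
    exact mul_le_mul (hu.abs_const_sub_le β τ) (hM τ hτ) (abs_nonneg _)
      (add_nonneg (abs_nonneg β) hu.nonneg)
  · exact (hu.intervalIntegrable_const_sub_mul β h.2.1 0 t).neg.mul_continuousOn
      h.1.continuousOn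
  · rw [h.2.2.1 τ hτ.1]
    congr 2 with σ
    ring

theorem s_eq (h : SIRSol β γ u s i s₀ i₀) {t : ℝ} (ht : 0 ≤ t) :
    s t = s₀ - ∫ τ in (0:ℝ)..t, (β - u τ) * s τ * i τ := by
  rw [h.2.2.1 t ht, intervalIntegral.integral_neg, sub_eq_add_neg]

theorem i_eq (hu : IsControl umax u) (h : SIRSol β γ u s i s₀ i₀) {t : ℝ} (ht : 0 ≤ t) :
    i t = i₀ + (∫ τ in (0:ℝ)..t, (β - u τ) * s τ * i τ) - γ * ∫ τ in (0:ℝ)..t, i τ := by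
  rw [h.2.2.2 t ht, integral_sub (h.intervalIntegrable_incidence hu 0 t)
      ((h.2.1.const_mul γ).intervalIntegrable 0 t), intervalIntegral.integral_const_mul,
    add_sub_assoc]

theorem mem_triangle (hu : IsControl umax u) (hγ : 0 ≤ γ) (h : SIRSol β γ u s i s₀ i₀)
    (h₀ : (s₀, i₀) ∈ Triangle) {t : ℝ} (ht : 0 ≤ t) : (s t, i t) ∈ Triangle := by
  obtain ⟨hs₀, -, hi₀, -, hsum₀⟩ := h₀
  have hs := h.s_pos hu hs₀ ht
  have hi := h.i_pos hu hi₀ ht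
  have hsum : s t + i t ≤ 1 := by
    have : 0 ≤ ∫ τ in (0:ℝ)..t, i τ :=
      intervalIntegral.integral_nonneg ht fun τ hτ => (h.i_pos hu hi₀ hτ.1).le
    rw [h.s_eq ht, h.i_eq hu ht]
    nlinarith
  exact ⟨hs, by linarith, hi, by linarith, hsum⟩

section Stability

variable {u₁ u₂ s₁ s₂ i₁ i₂ : ℝ → ℝ}

theorem integral_incidence_sub (hu₁ : IsControl umax u₁) (hu₂ : IsControl umax u₂)
    (h₁ : SIRSol β γ u₁ s₁ i₁ s₀ i₀) (h₂ : SIRSol β γ u₂ s₂ i₂ s₀ i₀) (t : ℝ) :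
    (∫ τ in (0:ℝ)..t, (β - u₁ τ) * s₁ τ * i₁ τ) - ∫ τ in (0:ℝ)..t, (β - u₂ τ) * s₂ τ * i₂ τ =
      (∫ τ in (0:ℝ)..t, (β - u₁ τ) * (s₁ τ * i₁ τ - s₂ τ * i₂ τ)) -
        ∫ τ in (0:ℝ)..t, (u₁ τ - u₂ τ) * (s₂ τ * i₂ τ) := by
  have hP : IntervalIntegrable (fun τ => (β - u₁ τ) * (s₁ τ * i₁ τ - s₂ τ * i₂ τ)) volume 0 t :=
    hu₁.intervalIntegrable_const_sub_mul β ((h₁.1.mul h₁.2.1).sub (h₂.1.mul h₂.2.1)) 0 t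
  have hG : IntervalIntegrable (fun τ => (u₁ τ - u₂ τ) * (s₂ τ * i₂ τ)) volume 0 t :=
    ((hu₁.intervalIntegrable 0 t).sub (hu₂.intervalIntegrable 0 t)).mul_continuousOn
      (h₂.1.mul h₂.2.1).continuousOn
  rw [← integral_sub (h₁.intervalIntegrable_incidence hu₁ 0 t)
      (h₂.intervalIntegrable_incidence hu₂ 0 t), ← integral_sub hP hG]
  congr 1 with τ
  ring

theorem abs_sub_add_abs_sub_le_integral (hu₁ : IsControl umax u₁) (hu₂ : IsControl umax u₂)
    (hγ : 0 ≤ γ) (h₁ : SIRSol β γ u₁ s₁ i₁ s₀ i₀) (h₂ : SIRSol β γ u₂ s₂ i₂ s₀ i₀) {T η : ℝ}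
    (hT₁ : ∀ t ∈ Icc 0 T, (s₁ t, i₁ t) ∈ Triangle) (hT₂ : ∀ t ∈ Icc 0 T, (s₂ t, i₂ t) ∈ Triangle)
    (hη : ∀ t ∈ Icc 0 T, |∫ τ in (0:ℝ)..t, (u₁ τ - u₂ τ) * (s₂ τ * i₂ τ)| ≤ η)
    {t : ℝ} (ht : t ∈ Icc 0 T) :
    |s₁ t - s₂ t| + |i₁ t - i₂ t| ≤
      (2 * (|β| + umax) + γ) * (∫ τ in (0:ℝ)..t, (|s₁ τ - s₂ τ| + |i₁ τ - i₂ τ|)) + 2 * η := by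
  set w : ℝ → ℝ := fun τ => |s₁ τ - s₂ τ| + |i₁ τ - i₂ τ|
  have hw : Continuous w := (h₁.1.sub h₂.1).abs.add (h₁.2.1.sub h₂.2.1).abs
  set W := ∫ τ in (0:ℝ)..t, w τ
  set P := ∫ τ in (0:ℝ)..t, (β - u₁ τ) * (s₁ τ * i₁ τ - s₂ τ * i₂ τ)
  set G := ∫ τ in (0:ℝ)..t, (u₁ τ - u₂ τ) * (s₂ τ * i₂ τ)
  set I := ∫ τ in (0:ℝ)..t, (i₁ τ - i₂ τ)
  have hsub : Ioc 0 t ⊆ Icc 0 T := Ioc_subset_Icc_self.trans (Icc_subset_Icc le_rfl ht.2)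
  have hprod {τ : ℝ} (hτ : τ ∈ Icc 0 T) : |s₁ τ * i₁ τ - s₂ τ * i₂ τ| ≤ w τ := by
    obtain ⟨hs₁, hs₁', -⟩ := hT₁ τ hτ
    obtain ⟨-, -, hi₂, hi₂', -⟩ := hT₂ τ hτ
    calc |s₁ τ * i₁ τ - s₂ τ * i₂ τ| = |s₁ τ * (i₁ τ - i₂ τ) + (s₁ τ - s₂ τ) * i₂ τ| := by
          ring_nf
      _ ≤ |s₁ τ| * |i₁ τ - i₂ τ| + |s₁ τ - s₂ τ| * |i₂ τ| := by
          rw [← abs_mul, ← abs_mul]; exact abs_add_le _ _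
      _ ≤ 1 * |i₁ τ - i₂ τ| + |s₁ τ - s₂ τ| * 1 := by
          gcongr
          · exact abs_le.2 ⟨by linarith, hs₁'⟩
          · exact abs_le.2 ⟨by linarith, hi₂'⟩
      _ = w τ := by ring
  have hPW : |P| ≤ (|β| + umax) * W := by
    rw [← Real.norm_eq_abs, ← intervalIntegral.integral_const_mul]
    refine norm_integral_le_of_norm_le ht.1 (ae_of_all _ fun τ hτ => ?_)
      ((hw.const_mul _).intervalIntegrable _ _)
    rw [Real.norm_eq_abs, abs_mul]
    exact mul_le_mul (hu₁.abs_const_sub_le β τ) (hprod (hsub hτ)) (abs_nonneg _)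
      (add_nonneg (abs_nonneg β) hu₁.nonneg)
  have hIW : |I| ≤ W := by
    rw [← Real.norm_eq_abs]
    refine norm_integral_le_of_norm_le ht.1 (ae_of_all _ fun τ _ => ?_) (hw.intervalIntegrable _ _)
    exact le_add_of_nonneg_left (abs_nonneg _)
  have hΔs : s₁ t - s₂ t = G - P := by
    rw [h₁.s_eq ht.1, h₂.s_eq ht.1]
    linarith [integral_incidence_sub hu₁ hu₂ h₁ h₂ t]
  have hΔi : i₁ t - i₂ t = P - G - γ * I := by
    have hI : I = (∫ τ in (0:ℝ)..t, i₁ τ) - ∫ τ in (0:ℝ)..t, i₂ τ :=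
      integral_sub (h₁.2.1.intervalIntegrable 0 t) (h₂.2.1.intervalIntegrable 0 t)
    rw [h₁.i_eq hu₁ ht.1, h₂.i_eq hu₂ ht.1]
    linear_combination integral_incidence_sub hu₁ hu₂ h₁ h₂ t + γ * hI
  have hG := hη t ht
  have hγI : |γ * I| ≤ γ * W := by
    rw [abs_mul, abs_of_nonneg hγ]; exact mul_le_mul_of_nonneg_left hIW hγ
  calc |s₁ t - s₂ t| + |i₁ t - i₂ t| ≤ (|G| + |P|) + (|P| + |G| + |γ * I|) := by
        rw [hΔs, hΔi]
        exact add_le_add (abs_sub _ _) ((abs_sub _ _).trans (add_le_add (abs_sub _ _) le_rfl))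
    _ ≤ (2 * (|β| + umax) + γ) * W + 2 * η := by linarith

theorem abs_sub_add_abs_sub_le (hu₁ : IsControl umax u₁) (hu₂ : IsControl umax u₂)
    (hγ : 0 ≤ γ) (h₁ : SIRSol β γ u₁ s₁ i₁ s₀ i₀) (h₂ : SIRSol β γ u₂ s₂ i₂ s₀ i₀) {T η : ℝ}
    (hT₁ : ∀ t ∈ Icc 0 T, (s₁ t, i₁ t) ∈ Triangle) (hT₂ : ∀ t ∈ Icc 0 T, (s₂ t, i₂ t) ∈ Triangle)
    (hη : ∀ t ∈ Icc 0 T, |∫ τ in (0:ℝ)..t, (u₁ τ - u₂ τ) * (s₂ τ * i₂ τ)| ≤ η) :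
    ∀ t ∈ Icc 0 T,
      |s₁ t - s₂ t| + |i₁ t - i₂ t| ≤ 2 * η * Real.exp ((2 * (|β| + umax) + γ) * t) :=
  le_mul_exp_of_le_integral (by linarith [abs_nonneg β, hu₁.nonneg])
    ((h₁.1.sub h₂.1).abs.add (h₁.2.1.sub h₂.2.1).abs)
    fun _ ht => abs_sub_add_abs_sub_le_integral hu₁ hu₂ hγ h₁ h₂ hT₁ hT₂ hη ht

end Stability

end SIRSol

namespace WeakStarLim

variable {umax : ℝ} {un : ℕ → ℝ → ℝ} {u g : ℝ → ℝ}

theorem tendsto_intervalIntegral_sub_mul (hweak : WeakStarLim un u)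
    (hun : ∀ n, IsControl umax (un n)) (hu : IsControl umax u) (hg : Continuous g) {t : ℝ}
    (ht : 0 ≤ t) :
    Tendsto (fun n => ∫ τ in (0:ℝ)..t, (un n τ - u τ) * g τ) atTop (𝓝 0) := by
  have htest (v : ℝ → ℝ) :
      ∫ τ in Ioi 0, v τ * (Ioc 0 t).indicator g τ = ∫ τ in (0:ℝ)..t, v τ * g τ := by
    simp_rw [← indicator_mul_right]
    rw [MeasureTheory.integral_indicator measurableSet_Ioc,
      Measure.restrict_restrict measurableSet_Ioc, inter_eq_left.2 Ioc_subset_Ioi_self, integral_of_le ht]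
  have hlim := hweak ((Ioc 0 t).indicator g)
    ((integrable_indicator_iff measurableSet_Ioc).2 hg.integrableOn_Ioc).integrableOn
  simp only [htest] at hlim
  have hsub (n : ℕ) : ∫ τ in (0:ℝ)..t, (un n τ - u τ) * g τ =
      (∫ τ in (0:ℝ)..t, un n τ * g τ) - ∫ τ in (0:ℝ)..t, u τ * g τ := by
    rw [← integral_sub (((hun n).intervalIntegrable 0 t).mul_continuousOn hg.continuousOn)
      ((hu.intervalIntegrable 0 t).mul_continuousOn hg.continuousOn)]
    congr 1 with τ
    ring
  simpa [hsub] using hlim.sub_const (∫ τ in (0:ℝ)..t, u τ * g τ)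

theorem tendstoUniformlyOn_intervalIntegral_sub_mul (hweak : WeakStarLim un u)
    (hun : ∀ n, IsControl umax (un n)) (hu : IsControl umax u) (hg : Continuous g) (T : ℝ) :
    TendstoUniformlyOn (fun n t => ∫ τ in (0:ℝ)..t, (un n τ - u τ) * g τ) 0 atTop (Icc 0 T) := by
  obtain ⟨M, hM⟩ := (isCompact_Icc (a := 0) (b := T)).exists_bound_of_continuousOn hg.continuousOn
  have hint (n : ℕ) (a b : ℝ) :
      IntervalIntegrable (fun τ => (un n τ - u τ) * g τ) volume a b :=
    (((hun n).intervalIntegrable a b).sub (hu.intervalIntegrable a b)).mul_continuousOn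
      hg.continuousOn
  refine tendstoUniformlyOn_of_lipschitzOnWith (K := (umax * M).toNNReal) isCompact_Icc
    (fun n => LipschitzOnWith.of_dist_le_mul fun x hx y hy => ?_)
    fun t ht => hweak.tendsto_intervalIntegral_sub_mul hun hu hg ht.1
  rw [Real.dist_eq, Real.dist_eq, integral_interval_sub_left (hint n 0 x) (hint n 0 y),
    ← Real.norm_eq_abs]
  refine (intervalIntegral.norm_integral_le_of_norm_le_const fun τ hτ => ?_).trans
    (mul_le_mul_of_nonneg_right (Real.le_coe_toNNReal _) (abs_nonneg _))
  have hτ' : τ ∈ Icc 0 T := (uIoc_subset_uIcc.trans (uIcc_subset_Icc hy hx)) hτ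
  rw [Real.norm_eq_abs, abs_mul]
  exact mul_le_mul ((hun n).abs_sub_le hu τ) (hM τ hτ') (abs_nonneg _) hu.nonneg

end WeakStarLim

theorem statement15 (β γ umax : ℝ) (hγ : 0 < γ)
    (i₀ s₀ : ℝ) (hi₀ : i₀ ∈ Set.Ioo (0:ℝ) 1) (hs₀ : s₀ ∈ Set.Ioc (0:ℝ) (1 - i₀))
    (un : ℕ → ℝ → ℝ) (sn iN : ℕ → ℝ → ℝ) (u s i : ℝ → ℝ)
    (hun : ∀ n, IsControl umax (un n)) (hu : IsControl umax u)
    (hsoln : ∀ n, SIRSol β γ (un n) (sn n) (iN n) s₀ i₀)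
    (hsol : SIRSol β γ u s i s₀ i₀)
    (hweak : WeakStarLim un u) :
    ∀ a b : ℝ, 0 ≤ a →
      TendstoUniformlyOn (fun n => sn n) s Filter.atTop (Set.Icc a b) ∧
      TendstoUniformlyOn (fun n => iN n) i Filter.atTop (Set.Icc a b) := by
  intro a b ha
  have h₀ : (s₀, i₀) ∈ Triangle :=
    ⟨hs₀.1, by linarith [hs₀.2, hi₀.1], hi₀.1, hi₀.2.le, by linarith [hs₀.2]⟩
  set K := 2 * (|β| + umax) + γ
  have hK : 0 ≤ K := by linarith [abs_nonneg β, hu.nonneg]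
  have hE := hweak.tendstoUniformlyOn_intervalIntegral_sub_mul hun hu (hsol.1.mul hsol.2.1) b
  have hdist : ∀ ε > 0, ∀ᶠ n in atTop, ∀ t ∈ Icc a b, |sn n t - s t| + |iN n t - i t| < ε := by
    intro ε hε
    set η := ε / (3 * Real.exp (K * b))
    filter_upwards [Metric.tendstoUniformlyOn_iff.1 hE η (by positivity)] with n hn t ht
    have hstab := (hsoln n).abs_sub_add_abs_sub_le (hun n) hu hγ.le hsol
      (fun t ht => (hsoln n).mem_triangle (hun n) hγ.le h₀ ht.1)
      (fun t ht => hsol.mem_triangle hu hγ.le h₀ ht.1)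
      (fun t ht => by simpa using (hn t ht).le) t ⟨ha.trans ht.1, ht.2⟩
    calc |sn n t - s t| + |iN n t - i t| ≤ 2 * η * Real.exp (K * t) := hstab
      _ ≤ 2 * η * Real.exp (K * b) := by gcongr; exact ht.2
      _ < ε := by simp only [η]; field_simp; linarith
  refine ⟨Metric.tendstoUniformlyOn_iff.2 fun ε hε => ?_,
    Metric.tendstoUniformlyOn_iff.2 fun ε hε => ?_⟩ <;>
    filter_upwards [hdist ε hε] with n hn t ht <;> rw [dist_comm, Real.dist_eq]
  · linarith [hn t ht, abs_nonneg (iN n t - i t)]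
  · linarith [hn t ht, abs_nonneg (sn n t - s t)]
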